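/- In a brace on six or more vertices, every edge is removable. -/

import Mathlib

open Classical in
/-- A finite multigraph: loops are forbidden, multiple edges are allowed. -/
structure Multigraph where
  V : Type
  E : Type
  [fintV : Fintype V]
  [fintE : Fintype E]
  ends : E → Sym2 V
  no_loops : ∀ e, ¬ (ends e).IsDiag

attribute [instance] Multigraph.fintV Multigraph.fintE

namespace Multigraph

variable (G : Multigraph)

/-- Vertex `v` is incident with edge `e`. -/
def Inc (v : G.V) (e : G.E) : Prop := v ∈ G.ends e

/-- Adjacency of vertices. -/
def Adj (u v : G.V) : Prop := u ≠ v ∧ ∃ e, G.ends e = s(u, v)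

/-- A multigraph is connected. -/
def Connected : Prop := Nonempty G.V ∧ ∀ u v : G.V, Relation.ReflTransGen G.Adj u v

/-- A set of edges is a perfect matching: every vertex is covered exactly once. -/
def IsPerfectMatching (M : Set G.E) : Prop :=
  ∀ v : G.V, ∃! e, e ∈ M ∧ G.Inc v e

/-- Matching covered: nontrivial, connected, every edge lies in a perfect matching. -/
def MatchingCovered : Prop :=
  2 ≤ Nat.card G.V ∧ G.Connected ∧ ∀ e : G.E, ∃ M, G.IsPerfectMatching M ∧ e ∈ M

/-- Degree of a vertex. -/
noncomputable def degree (v : G.V) : ℕ := Nat.card {e : G.E // G.Inc v e}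

/-- Maximum degree `Δ(G)`. -/
noncomputable def maxDegree : ℕ := Finset.univ.sup G.degree

/-- The graph obtained by deleting the edge `e`. -/
noncomputable def deleteEdge (e : G.E) : Multigraph where
  V := G.V
  E := {f : G.E // f ≠ e}
  fintE := Fintype.ofFinite _
  ends f := G.ends f.1
  no_loops f := G.no_loops f.1

/-- An edge of `G` is removable if `G - e` is matching covered. -/
noncomputable def Removable (e : G.E) : Prop := (G.deleteEdge e).MatchingCovered

/-- The graph obtained by deleting a set of vertices (and all incident edges). -/
noncomputable def deleteVerts (S : Set G.V) : Multigraph where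
  V := {v : G.V // v ∉ S}
  E := {e : G.E // ∀ v ∈ G.ends e, v ∉ S}
  fintV := Fintype.ofFinite _
  fintE := Fintype.ofFinite _
  ends e := (G.ends e.1).attachWith e.2
  no_loops e h := G.no_loops e.1 (by
    have := (Sym2.isDiag_map Subtype.val_injective).mpr h
    simpa using this)

/-- Two-connectedness: at least three vertices, and deleting any vertex
leaves a connected graph. -/
noncomputable def TwoConnected : Prop :=
  3 ≤ Nat.card G.V ∧ ∀ v : G.V, (G.deleteVerts {v}).Connected

/-- Three-connectedness: at least four vertices, and deleting any two distinct
vertices leaves a connected graph. -/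
noncomputable def ThreeConnected : Prop :=
  4 ≤ Nat.card G.V ∧ ∀ u v : G.V, u ≠ v → (G.deleteVerts {u, v}).Connected

/-- The cut `∂(X)`: edges with exactly one end in `X`. -/
def cut (X : Set G.V) : Set G.E :=
  {e | ∃ u ∈ X, ∃ w ∈ Xᶜ, G.ends e = s(u, w)}

/-- A tight cut: a cut (with both shores nonempty) met by every perfect matching
in exactly one edge. -/
def IsTightCut (X : Set G.V) : Prop :=
  X.Nonempty ∧ Xᶜ.Nonempty ∧
    ∀ M : Set G.E, G.IsPerfectMatching M → ∃! e, e ∈ M ∧ e ∈ G.cut X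

/-- A cut `∂(X)` is trivial if one of its shores is a singleton. -/
def TrivialShore (X : Set G.V) : Prop := (∃ v, X = {v}) ∨ (∃ v, Xᶜ = {v})

/-- `G` is bipartite. -/
def Bipartite : Prop :=
  ∃ c : G.V → Bool, ∀ (e : G.E) (a b : G.V), G.ends e = s(a, b) → c a ≠ c b

/-- The subgraph of `G` induced by `X` is bipartite. -/
def BipartiteOn (X : Set G.V) : Prop :=
  ∃ c : G.V → Bool, ∀ (e : G.E) (a b : G.V),
    G.ends e = s(a, b) → a ∈ X → b ∈ X → c a ≠ c b

lemma Sym2.exists_eq_mk {α : Type*} (z : Sym2 α) : ∃ a b, z = s(a, b) := by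
  induction z using Sym2.ind with
  | _ x y => exact ⟨x, y, rfl⟩

open Classical in
/-- Contraction `G/X`: the shore `X` is shrunk to a single new vertex.
Edges with both ends in `X` disappear. -/
noncomputable def contract (X : Set G.V) : Multigraph where
  V := {v : G.V // v ∉ X} ⊕ Unit
  E := {e : G.E // ¬ ∀ v ∈ G.ends e, v ∈ X}
  fintV := Fintype.ofFinite _
  fintE := Fintype.ofFinite _
  ends e := (G.ends e.1).map
    (fun v => if h : v ∈ X then Sum.inr () else Sum.inl ⟨v, h⟩)
  no_loops := by
    rintro ⟨e, he⟩ hdiag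
    obtain ⟨a, b, hab⟩ := Sym2.exists_eq_mk (G.ends e)
    have hne : a ≠ b := by
      have := G.no_loops e
      rw [hab, Sym2.mk_isDiag_iff] at this
      exact this
    simp only [hab, Sym2.map_pair_eq, Sym2.mk_isDiag_iff] at hdiag
    by_cases ha : a ∈ X <;> by_cases hb : b ∈ X
    · exact he (by
        rw [hab]; intro v hv
        rcases Sym2.mem_iff.mp hv with h | h <;> subst h <;> assumption)
    · rw [dif_pos ha, dif_neg hb] at hdiag; simp at hdiag
    · rw [dif_neg ha, dif_pos hb] at hdiag; simp at hdiag
    · rw [dif_neg ha, dif_neg hb] at hdiag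
      simp only [Sum.inl.injEq, Subtype.mk.injEq] at hdiag
      exact hne hdiag

/-- A brick: a nonbipartite matching covered graph all of whose tight cuts are
trivial. -/
def IsBrick : Prop :=
  G.MatchingCovered ∧ ¬ G.Bipartite ∧ ∀ X : Set G.V, G.IsTightCut X → G.TrivialShore X

/-- A brace: a bipartite matching covered graph all of whose tight cuts are
trivial. -/
def IsBrace : Prop :=
  G.MatchingCovered ∧ G.Bipartite ∧ ∀ X : Set G.V, G.IsTightCut X → G.TrivialShore X

/-- `BrickCount G n` holds if some tight cut decomposition of `G` produces
exactly `n` bricks.  (By Lovász's theorem the number `n` is independent of the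
decomposition.) -/
inductive BrickCount : (G : Multigraph) → ℕ → Prop
  | brick (G : Multigraph) (h : G.IsBrick) : BrickCount G 1
  | brace (G : Multigraph) (h : G.IsBrace) : BrickCount G 0
  | cut (G : Multigraph) (X : Set G.V) (ht : G.IsTightCut X) (hnt : ¬ G.TrivialShore X)
      {n m : ℕ} (h1 : BrickCount (G.contract X) n) (h2 : BrickCount (G.contract Xᶜ) m) :
      BrickCount G (n + m)

/-- A near-brick: a matching covered graph whose tight cut decompositions
have exactly one brick. -/
def IsNearBrick : Prop := G.MatchingCovered ∧ BrickCount G 1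

/-- A single ear of length at least 3: an odd path of length `k ≥ 3` all of whose
internal vertices have degree two. -/
def HasLongSingleEar : Prop :=
  ∃ (k : ℕ) (v : Fin (k + 1) → G.V) (e : Fin k → G.E),
    Odd k ∧ 3 ≤ k ∧ Function.Injective v ∧ Function.Injective e ∧
    (∀ i : Fin k, G.ends (e i) = s(v i.castSucc, v i.succ)) ∧
    (∀ i : Fin (k + 1), i ≠ 0 → i ≠ Fin.last k → G.degree (v i) = 2)

/-- Irreducible: no single ear of length three or more. -/
def Irreducible : Prop := ¬ G.HasLongSingleEar

/-- Isomorphism of multigraphs. -/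
def IsIso (G H : Multigraph) : Prop :=
  ∃ (φ : G.V ≃ H.V) (ψ : G.E ≃ H.E), ∀ e, H.ends (ψ e) = (G.ends e).map φ

end Multigraph

open Multigraph

/-- The complete graph `K₂`. -/
def K2 : Multigraph where
  V := Fin 2
  E := Unit
  ends _ := s(0, 1)
  no_loops _ := by simp [Sym2.mk_isDiag_iff]

/-- The complete graph `K₄`. -/
noncomputable def K4 : Multigraph where
  V := Fin 4
  E := {p : Sym2 (Fin 4) // ¬ p.IsDiag}
  fintE := Fintype.ofFinite _
  ends p := p.1
  no_loops p := p.2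

/-- The cycle `C₄`. -/
def C4 : Multigraph where
  V := ZMod 4
  E := ZMod 4
  ends i := s(i, i + 1)
  no_loops i := by
    have h : ∀ j : ZMod 4, j ≠ j + 1 := by decide
    simpa [Sym2.mk_isDiag_iff] using h i

/-- `C̄₆`, the complement of the 6-cycle (the triangular prism). -/
noncomputable def C6bar : Multigraph where
  V := ZMod 6
  E := {p : Sym2 (ZMod 6) // ¬ p.IsDiag ∧ ∀ a b : ZMod 6, p = s(a, b) → b ≠ a + 1 ∧ a ≠ b + 1}
  fintE := Fintype.ofFinite _
  ends p := p.1
  no_loops p := p.2.1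

/-!
Let `G` be a brace with colour classes `A`, `B`. If a nonempty `S ⊆ A` with `2|S| + 3 ≤ |V|`
had at most `|S| + 1` neighbours, then `S ∪ N(S)` would either be left by no perfect-matching
edge at all (impossible, as `G` is connected and matching covered) or be a nontrivial tight cut.
So `|N(S)| ≥ |S| + 2`, which is Hall's condition for matching `A - x - u` into `B - y - w`:
any two disjoint edges `xy`, `uw` extend to a perfect matching. For `e = uv` and an edge
`f = xy` not at `u`, taking for `uw` one of the at least three edges at `u` with `w ∉ {v, y}`
yields a perfect matching containing `f` but not `e`. Finally, `e` is not a bridge of `G`, since the component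
of `u` in `G - e` would be balanced by a perfect matching avoiding `e` and unbalanced by one
containing it.
-/

theorem Set.InjOn.ite_ite {α β : Type*} [DecidableEq α] {φ : α → β} {T : Set α}
    (hφ : Set.InjOn φ T) {x u : α} {y w : β} (hyw : y ≠ w) (hy : ∀ a ∈ T, φ a ≠ y)
    (hw : ∀ a ∈ T, φ a ≠ w) :
    Set.InjOn (fun z => if z = x then y else if z = u then w else φ z)
      (insert x (insert u T)) := by
  intro a ha b hb hab
  simp only [Set.mem_insert_iff] at ha hb
  grind [Set.InjOn]

theorem Bool.eq_of_ne_of_ne {a b c : Bool} (hab : a ≠ b) (hbc : b ≠ c) : a = c := by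
  cases a <;> cases b <;> cases c <;> simp_all

namespace Multigraph

open Finset Classical

variable {G : Multigraph}

lemma adj_of_ends {g : G.E} {a b : G.V} (h : G.ends g = s(a, b)) : G.Adj a b :=
  ⟨fun hab => G.no_loops g (by rw [h, hab]; exact Sym2.mk_isDiag_iff.mpr rfl), g, h⟩

lemma Adj.symm {a b : G.V} (h : G.Adj a b) : G.Adj b a :=
  ⟨h.1.symm, h.2.imp fun _ hg => hg.trans Sym2.eq_swap⟩

instance : Std.Symm G.Adj := ⟨fun _ _ => Adj.symm⟩

lemma exists_mem_cut (hG : G.Connected) {X : Set G.V} (hX : X.Nonempty) (hXc : Xᶜ.Nonempty) :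
    ∃ g, g ∈ G.cut X := by
  obtain ⟨a, ha⟩ := hX
  obtain ⟨b, hb⟩ := hXc
  induction hG.2 a b with
  | refl => exact absurd ha hb
  | @tail p q _ hpq ih =>
    by_cases hp : p ∈ X
    · obtain ⟨-, g, hg⟩ := hpq
      exact ⟨g, p, hp, q, hb, hg⟩
    · exact ih hp

def IsProperColoring (G : Multigraph) (c : G.V → Bool) : Prop :=
  ∀ (e : G.E) (a b : G.V), G.ends e = s(a, b) → c a ≠ c b

lemma IsProperColoring.ne_of_adj {c : G.V → Bool} (hc : G.IsProperColoring c) {a b : G.V}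
    (h : G.Adj a b) : c a ≠ c b := by
  obtain ⟨-, g, hg⟩ := h
  exact hc g a b hg

lemma IsProperColoring.exists_ends_eq {c : G.V → Bool} (hc : G.IsProperColoring c) (f : G.E)
    (β : Bool) : ∃ x y, G.ends f = s(x, y) ∧ c x = β := by
  obtain ⟨a, b, hf⟩ := Sym2.exists_eq_mk (G.ends f)
  by_cases ha : c a = β
  · exact ⟨a, b, hf, ha⟩
  · exact ⟨b, a, hf.trans Sym2.eq_swap, Bool.eq_of_ne_of_ne (hc f a b hf).symm ha⟩

namespace IsPerfectMatching

variable {M : Set G.E} (hM : G.IsPerfectMatching M)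

noncomputable def edge (v : G.V) : G.E := (hM v).exists.choose

lemma edge_mem (v : G.V) : hM.edge v ∈ M := (hM v).exists.choose_spec.1

lemma mem_ends_edge (v : G.V) : v ∈ G.ends (hM.edge v) := (hM v).exists.choose_spec.2

noncomputable def mate (v : G.V) : G.V := Sym2.Mem.other (hM.mem_ends_edge v)

lemma ends_edge (v : G.V) : G.ends (hM.edge v) = s(v, hM.mate v) :=
  (Sym2.other_spec _).symm

lemma eq_edge {v : G.V} {g : G.E} (hg : g ∈ M) (hv : v ∈ G.ends g) : g = hM.edge v :=
  (hM v).unique ⟨hg, hv⟩ ⟨hM.edge_mem v, hM.mem_ends_edge v⟩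

lemma eq_of_mem_ends (hM : G.IsPerfectMatching M) {v : G.V} {g g' : G.E} (hg : g ∈ M)
    (hg' : g' ∈ M) (hv : v ∈ G.ends g) (hv' : v ∈ G.ends g') : g = g' :=
  (hM.eq_edge hg hv).trans (hM.eq_edge hg' hv').symm

lemma adj_mate (v : G.V) : G.Adj v (hM.mate v) := adj_of_ends (hM.ends_edge v)

lemma mate_eq {g : G.E} {a b : G.V} (hg : g ∈ M) (h : G.ends g = s(a, b)) : hM.mate a = b := by
  have := hM.ends_edge a
  rw [← hM.eq_edge hg (h ▸ Sym2.mem_mk_left a b), h] at this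
  exact (Sym2.congr_right.mp this).symm

lemma mate_mate (v : G.V) : hM.mate (hM.mate v) = v :=
  hM.mate_eq (hM.edge_mem v) ((hM.ends_edge v).trans Sym2.eq_swap)

lemma mate_injective : Function.Injective hM.mate :=
  Function.Involutive.injective hM.mate_mate

lemma deleteEdge (hM : G.IsPerfectMatching M) {e : G.E} (he : e ∉ M) :
    (G.deleteEdge e).IsPerfectMatching {f | f.1 ∈ M} := by
  intro z
  obtain ⟨g, ⟨hgM, hgz⟩, hg⟩ := hM z
  refine ⟨⟨g, fun h => he (h ▸ hgM)⟩, ⟨hgM, hgz⟩, ?_⟩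
  intro f hf
  exact Subtype.ext (hg f.1 hf)

end IsPerfectMatching

lemma MatchingCovered.exists_isPerfectMatching (hG : G.MatchingCovered) :
    ∃ M, G.IsPerfectMatching M := by
  obtain ⟨a, b, hab⟩ := Finite.one_lt_card_iff_nontrivial.mp hG.1 |>.exists_pair_ne
  obtain ⟨g, -⟩ := exists_mem_cut hG.2.1 (Set.singleton_nonempty a) ⟨b, hab.symm⟩
  obtain ⟨M, hM, -⟩ := hG.2.2 g
  exact ⟨M, hM⟩

section Coloring

variable {c : G.V → Bool} {M : Set G.E}

lemma IsProperColoring.mate_ne (hc : G.IsProperColoring c) (hM : G.IsPerfectMatching M)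
    (v : G.V) : c (hM.mate v) ≠ c v :=
  (hc.ne_of_adj (hM.adj_mate v)).symm

lemma IsProperColoring.card_filter_eq (hc : G.IsProperColoring c) (hM : G.IsPerfectMatching M)
    (β : Bool) : #{z | c z = β} = #{z | c z ≠ β} := by
  refine le_antisymm (card_le_card_of_injOn hM.mate ?_ hM.mate_injective.injOn)
    (card_le_card_of_injOn hM.mate ?_ hM.mate_injective.injOn)
  · intro a ha
    simp only [coe_filter, mem_univ, true_and, Set.mem_ofPred_eq] at ha ⊢
    exact ha ▸ hc.mate_ne hM a
  · intro b hb
    simp only [coe_filter, mem_univ, true_and, Set.mem_ofPred_eq] at hb ⊢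
    exact Bool.eq_of_ne_of_ne (hc.mate_ne hM b) hb

lemma IsProperColoring.two_mul_card_filter (hc : G.IsProperColoring c)
    (hM : G.IsPerfectMatching M) (β : Bool) :
    2 * #{z | c z = β} = Fintype.card G.V := by
  have h := card_filter_add_card_filter_not (s := univ) (fun z => c z = β)
  rw [card_univ] at h
  rw [← h, two_mul]
  congr 1
  exact hc.card_filter_eq hM β

end Coloring

noncomputable def neighbors (G : Multigraph) (S : Finset G.V) : Finset G.V :=
  {b | ∃ a ∈ S, G.Adj a b}

lemma mem_neighbors {S : Finset G.V} {b : G.V} :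
    b ∈ G.neighbors S ↔ ∃ a ∈ S, G.Adj a b := by
  simp [neighbors]

section Neighbors

variable {M : Set G.E} (hM : G.IsPerfectMatching M) {S : Finset G.V}

lemma image_mate_subset_neighbors : S.image hM.mate ⊆ G.neighbors S := by
  intro b hb
  obtain ⟨a, ha, rfl⟩ := mem_image.1 hb
  exact mem_neighbors.2 ⟨a, ha, hM.adj_mate a⟩

lemma card_image_mate : #(S.image hM.mate) = #S :=
  card_image_of_injective S hM.mate_injective

lemma card_le_card_neighbors (hM : G.IsPerfectMatching M) : #S ≤ #(G.neighbors S) :=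
  card_image_mate hM ▸ card_le_card (image_mate_subset_neighbors hM)

lemma exists_eq_edge_of_mem_cut {g : G.E} (hg : g ∈ M)
    (hcut : g ∈ G.cut ↑(S ∪ G.neighbors S)) :
    ∃ t ∈ G.neighbors S \ S.image hM.mate, g = hM.edge t := by
  obtain ⟨p, hp, q, hq, hends⟩ := hcut
  have hpq : hM.mate p = q := hM.mate_eq hg hends
  simp only [Set.mem_compl_iff, coe_union, Set.mem_union, mem_coe, not_or] at hp hq
  refine ⟨p, ?_, hM.eq_edge hg (hends ▸ Sym2.mem_mk_left p q)⟩
  rcases hp with hpS | hpN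
  · exact absurd (mem_neighbors.2 ⟨p, hpS, adj_of_ends hends⟩) hq.2
  · refine mem_sdiff.2 ⟨hpN, fun hpim => ?_⟩
    obtain ⟨a, ha, rfl⟩ := mem_image.1 hpim
    rw [hM.mate_mate] at hpq
    exact hq.1 (hpq ▸ ha)

end Neighbors

section Expansion

variable {c : G.V → Bool} {β : Bool} {S : Finset G.V}

lemma IsProperColoring.ne_of_mem_neighbors (hc : G.IsProperColoring c) (hS : ∀ a ∈ S, c a = β)
    {b : G.V} (hb : b ∈ G.neighbors S) : c b ≠ β := by
  obtain ⟨a, ha, hab⟩ := mem_neighbors.1 hb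
  exact hS a ha ▸ (hc.ne_of_adj hab).symm

lemma IsProperColoring.disjoint_neighbors (hc : G.IsProperColoring c) (hS : ∀ a ∈ S, c a = β) :
    Disjoint S (G.neighbors S) :=
  disjoint_left.2 fun a ha hN => hc.ne_of_mem_neighbors hS hN (hS a ha)

/-- Each perfect matching leaves `S ∪ N(S)` only at the single vertex of `N(S)` that it does
not match into `S`. -/
lemma IsProperColoring.isTightCut_union_neighbors (hc : G.IsProperColoring c)
    (hS : ∀ a ∈ S, c a = β) (hN : #(G.neighbors S) = #S + 1)
    (hX : (↑(S ∪ G.neighbors S) : Set G.V).Nonempty)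
    (hXc : (↑(S ∪ G.neighbors S) : Set G.V)ᶜ.Nonempty) :
    G.IsTightCut ↑(S ∪ G.neighbors S) := by
  refine ⟨hX, hXc, fun M hM => ?_⟩
  obtain ⟨t, ht⟩ : ∃ t, G.neighbors S \ S.image hM.mate = {t} := by
    rw [← card_eq_one, card_sdiff_of_subset (image_mate_subset_neighbors hM),
      card_image_mate hM, hN, Nat.add_sub_cancel_left]
  have htN : t ∈ G.neighbors S := (mem_sdiff.1 (ht ▸ mem_singleton_self t)).1
  have htS : hM.mate t ∉ S := fun h =>
    (mem_sdiff.1 (ht ▸ mem_singleton_self t)).2 (mem_image.2 ⟨_, h, hM.mate_mate t⟩)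
  have htN' : hM.mate t ∉ G.neighbors S := fun h =>
    hc.ne_of_mem_neighbors hS h (Bool.eq_of_ne_of_ne (hc.mate_ne hM t)
      (hc.ne_of_mem_neighbors hS htN))
  refine ⟨hM.edge t, ⟨hM.edge_mem t, t, by simp [htN], hM.mate t, by simp [htS, htN'],
    hM.ends_edge t⟩, ?_⟩
  rintro g ⟨hgM, hgcut⟩
  obtain ⟨t', ht', rfl⟩ := exists_eq_edge_of_mem_cut hM hgM hgcut
  rw [ht, mem_singleton] at ht'
  rw [ht']

theorem IsBrace.add_two_le_card_neighbors (hG : G.IsBrace) (hc : G.IsProperColoring c)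
    (hS : S.Nonempty) (hSβ : ∀ a ∈ S, c a = β) (hsize : 2 * #S + 3 ≤ Fintype.card G.V) :
    #S + 2 ≤ #(G.neighbors S) := by
  obtain ⟨M, hM⟩ := hG.1.exists_isPerfectMatching
  set X : Set G.V := ↑(S ∪ G.neighbors S) with hXdef
  have hcardX : #(S ∪ G.neighbors S) = #S + #(G.neighbors S) :=
    card_union_of_disjoint (hc.disjoint_neighbors hSβ)
  have hXne : X.Nonempty := coe_nonempty.2 (hS.mono subset_union_left)
  have hle : #S ≤ #(G.neighbors S) := card_le_card_neighbors hM
  by_contra! hlt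
  have hXc : Xᶜ.Nonempty := by
    rw [Set.nonempty_compl, hXdef, Ne, coe_eq_univ]
    intro h
    rw [h, card_univ] at hcardX
    omega
  rcases (by omega : #(G.neighbors S) = #S ∨ #(G.neighbors S) = #S + 1) with hN | hN
  · obtain ⟨g, hg⟩ := exists_mem_cut hG.1.2.1 hXne hXc
    obtain ⟨M', hM', hgM'⟩ := hG.1.2.2 g
    obtain ⟨t, ht, -⟩ := exists_eq_edge_of_mem_cut hM' hgM' hg
    have : S.image hM'.mate = G.neighbors S :=
      eq_of_subset_of_card_le (image_mate_subset_neighbors hM')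
        (by rw [card_image_mate hM', hN])
    simp [this] at ht
  · rcases hG.2.2 X (hc.isTightCut_union_neighbors hSβ hN hXne hXc) with ⟨v, hv⟩ | ⟨v, hv⟩
    · have := congrArg Finset.card (coe_eq_singleton.1 hv)
      rw [card_singleton] at this
      have := hS.card_pos
      omega
    · have := congrArg Finset.card (coe_eq_singleton.1 ((coe_compl _).trans hv))
      rw [card_singleton, card_compl] at this
      omega

end Expansion

section Extension

variable {c : G.V → Bool} {β : Bool}

lemma IsProperColoring.isPerfectMatching_image (hc : G.IsProperColoring c)
    (hcard : #{z | c z = β} = #{z | c z ≠ β}) {φ : G.V → G.V} {ed : G.V → G.E}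
    (hed : ∀ a, c a = β → G.ends (ed a) = s(a, φ a)) (hφ : Set.InjOn φ {a | c a = β}) :
    G.IsPerfectMatching (ed '' {a | c a = β}) := by
  have hφc : ∀ a, c a = β → c (φ a) ≠ β := fun a ha => ha ▸ (hc _ _ _ (hed a ha)).symm
  have hsurj : ∀ b, c b ≠ β → ∃ a, c a = β ∧ φ a = b := by
    have himage : ({z | c z = β} : Finset G.V).image φ = ({z | c z ≠ β} : Finset G.V) := by
      refine eq_of_subset_of_card_le (fun b hb => ?_) ?_
      · obtain ⟨a, ha, rfl⟩ := mem_image.1 hb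
        simpa using hφc a (by simpa using ha)
      · rw [card_image_of_injOn (by simpa using hφ), hcard]
    intro b hb
    have : b ∈ ({z | c z = β} : Finset G.V).image φ := himage ▸ by simpa using hb
    simpa using this
  intro z
  by_cases hz : c z = β
  · refine ⟨ed z, ⟨Set.mem_image_of_mem _ hz, by simp [Inc, hed z hz]⟩, ?_⟩
    rintro _ ⟨⟨a, ha, rfl⟩, hza⟩
    rcases Sym2.mem_iff.1 (hed a ha ▸ hza : z ∈ s(a, φ a)) with rfl | rfl
    · rfl
    · exact absurd hz (hφc a ha)
  · obtain ⟨a, ha, rfl⟩ := hsurj z hz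
    refine ⟨ed a, ⟨Set.mem_image_of_mem _ ha, by simp [Inc, hed a ha]⟩, ?_⟩
    rintro _ ⟨⟨a', ha', rfl⟩, hza⟩
    rcases Sym2.mem_iff.1 (hed a' ha' ▸ hza : φ a ∈ s(a', φ a')) with h | h
    · exact absurd (h ▸ ha') hz
    · rw [hφ ha' ha h.symm]

/-- Hall's condition for matching `T` into `G - y - w` is the expansion `#N(S) ≥ #S + 2`. -/
lemma IsBrace.exists_injOn_adj (hG : G.IsBrace) (hc : G.IsProperColoring c)
    {T : Finset G.V} (hT : ∀ a ∈ T, c a = β) (hTcard : 2 * #T + 3 ≤ Fintype.card G.V)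
    (y w : G.V) :
    ∃ φ : G.V → G.V, Set.InjOn φ T ∧
      ∀ a ∈ T, G.Adj a (φ a) ∧ φ a ≠ y ∧ φ a ≠ w := by
  let r : T → Finset G.V := fun a => G.neighbors {a.1} \ {y, w}
  have hall : ∀ s : Finset T, #s ≤ #(s.biUnion r) := by
    intro s
    rcases s.eq_empty_or_nonempty with rfl | hs
    · simp
    set S := s.map (Function.Embedding.subtype _)
    have hSs : #S = #s := card_map _
    have hST : #S ≤ #T := by simpa [S] using card_le_univ s
    have hS := hG.add_two_le_card_neighbors (S := S) hc hs.map (β := β)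
      (by simpa [S] using fun a ha _ => hT a ha) (by omega)
    have hsub : G.neighbors S ⊆ s.biUnion r ∪ {y, w} := by
      intro b hb
      obtain ⟨a, ha, hab⟩ := mem_neighbors.1 hb
      obtain ⟨a, has, rfl⟩ := mem_map.1 ha
      by_cases hbyw : b = y ∨ b = w
      · exact mem_union_right _ (by simpa using hbyw)
      · simp only [not_or] at hbyw
        exact mem_union_left _
          (mem_biUnion.2 ⟨a, has, by simpa [r, mem_neighbors, hbyw] using hab⟩)
    have := (card_le_card hsub).trans (card_union_le _ _)
    have := card_le_two (a := y) (b := w)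
    omega
  obtain ⟨φ, hφinj, hφr⟩ := (all_card_le_biUnion_card_iff_exists_injective r).1 hall
  refine ⟨fun z => if h : z ∈ T then φ ⟨z, h⟩ else z, fun a ha b hb hab => ?_,
    fun a ha => ?_⟩
  · simp only [mem_coe] at ha hb
    simp only [ha, hb, dif_pos] at hab
    exact congrArg Subtype.val (hφinj hab)
  · simpa [ha, r, mem_neighbors] using hφr ⟨a, ha⟩

theorem IsBrace.exists_isPerfectMatching_mem_mem (hG : G.IsBrace) (hc : G.IsProperColoring c)
    {f g : G.E} {x y u w : G.V} (hf : G.ends f = s(x, y)) (hg : G.ends g = s(u, w))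
    (hxu : x ≠ u) (hyw : y ≠ w) (hcxu : c x = c u) :
    ∃ M, G.IsPerfectMatching M ∧ f ∈ M ∧ g ∈ M := by
  obtain ⟨M₀, hM₀⟩ := hG.1.exists_isPerfectMatching
  set A : Finset G.V := {a | c a = c u}
  have hA : 2 * #A = Fintype.card G.V := by convert hc.two_mul_card_filter hM₀ (c u)
  set T := (A.erase x).erase u
  have hTA : #T + 2 = #A := by
    rw [← card_erase_add_one (show x ∈ A by simp [A, hcxu]),
      ← card_erase_add_one (show u ∈ A.erase x by simp [A, hxu.symm])]
  have hT : ∀ a ∈ T, a ≠ u ∧ a ≠ x ∧ c a = c u := by simp [T, A]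
  obtain ⟨φ, hφinj, hφ⟩ := hG.exists_injOn_adj hc (fun a ha => (hT a ha).2.2) (by omega) y w
  have : Nonempty G.E := ⟨f⟩
  choose! ed hed using fun a ha => (hφ a ha).1.2
  let Φ : G.V → G.V := fun z => if z = x then y else if z = u then w else φ z
  let E : G.V → G.E := fun z => if z = x then f else if z = u then g else ed z
  have hclass : {a | c a = c u} ⊆ insert x (insert u ↑T) := by
    intro a ha
    by_cases hax : a = x <;> by_cases hau : a = u <;> simp_all [T, A]
  have hE : ∀ a, c a = c u → G.ends (E a) = s(a, Φ a) := by
    intro a ha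
    rcases hclass ha with rfl | rfl | haT
    · simp [E, Φ, hf]
    · simp [E, Φ, hxu.symm, hg]
    · obtain ⟨hau, hax, -⟩ := hT a haT
      simpa [E, Φ, hau, hax] using hed a haT
  have hΦ : Set.InjOn Φ {a | c a = c u} :=
    (hφinj.ite_ite hyw (fun a ha => (hφ a ha).2.1) (fun a ha => (hφ a ha).2.2)).mono hclass
  exact ⟨_, hc.isPerfectMatching_image (hc.card_filter_eq hM₀ _) hE hΦ,
    ⟨x, hcxu, if_pos rfl⟩, ⟨u, rfl, by simp [E, hxu.symm]⟩⟩

end Extension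

theorem IsBrace.exists_ends_eq_notMem (hG : G.IsBrace) (h5 : 5 ≤ Fintype.card G.V) (u : G.V)
    {s : Finset G.V} (hs : #s ≤ 2) : ∃ w g, G.ends g = s(u, w) ∧ w ∉ s := by
  obtain ⟨c, hc⟩ : ∃ c, G.IsProperColoring c := hG.2.1
  have h3 := hG.add_two_le_card_neighbors hc (singleton_nonempty u) (β := c u) (by simp)
    (by rw [card_singleton]; omega)
  rw [card_singleton] at h3
  obtain ⟨w, hw, hws⟩ := exists_mem_notMem_of_card_lt_card (hs.trans_lt h3)
  obtain ⟨_, hu, -, g, hg⟩ := mem_neighbors.1 hw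
  rw [mem_singleton.1 hu] at hg
  exact ⟨w, g, hg, hws⟩

theorem IsBrace.exists_isPerfectMatching_mem_not_mem (hG : G.IsBrace)
    (h6 : 6 ≤ Fintype.card G.V) {e f : G.E} (hfe : f ≠ e) :
    ∃ M, G.IsPerfectMatching M ∧ f ∈ M ∧ e ∉ M := by
  obtain ⟨c, hc⟩ : ∃ c, G.IsProperColoring c := hG.2.1
  obtain ⟨u, v, he⟩ := Sym2.exists_eq_mk (G.ends e)
  obtain ⟨x, y, hf, hcx⟩ := hc.exists_ends_eq f (c u)
  by_cases hxu : x = u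
  · obtain ⟨M, hM, hfM⟩ := hG.1.2.2 f
    exact ⟨M, hM, hfM, fun heM =>
      hfe (hM.eq_of_mem_ends (v := u) hfM heM (by simp [hf, hxu]) (by simp [he]))⟩
  obtain ⟨w, g, hg, hw⟩ := hG.exists_ends_eq_notMem (by omega) u (card_le_two (a := v) (b := y))
  simp only [mem_insert, mem_singleton, not_or] at hw
  obtain ⟨M, hM, hfM, hgM⟩ :=
    hG.exists_isPerfectMatching_mem_mem hc hf hg hxu (Ne.symm hw.2) hcx
  refine ⟨M, hM, hfM, fun heM => hw.1 ?_⟩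
  rw [hM.eq_of_mem_ends (v := u) hgM heM (by simp [hg]) (by simp [he]), he] at hg
  exact (Sym2.congr_right.1 hg).symm

/-- If `v` were not reachable from `u` in `G - e`, then on the component `R` of `u`, `M'` would
match `R ∩ c⁻¹(c u)` into `R ∖ c⁻¹(c u)`, while `M` would match the latter into the former
minus `u`. -/
lemma IsProperColoring.reflTransGen_deleteEdge {c : G.V → Bool} (hc : G.IsProperColoring c)
    {e : G.E} {u v : G.V} (he : G.ends e = s(u, v)) {M M' : Set G.E} (hM : G.IsPerfectMatching M)
    (heM : e ∈ M) (hM' : G.IsPerfectMatching M') (heM' : e ∉ M') :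
    Relation.ReflTransGen (G.deleteEdge e).Adj u v := by
  by_contra hv
  set R : G.V → Prop := Relation.ReflTransGen (G.deleteEdge e).Adj u
  have hstep : ∀ {N : Set G.E} (hN : G.IsPerfectMatching N) {z : G.V}, R z → hN.edge z ≠ e →
      R (hN.mate z) :=
    fun hN z hz hne => hz.tail ⟨(hN.adj_mate z).1, ⟨hN.edge z, hne⟩, hN.ends_edge z⟩
  have hA : #{z | R z ∧ c z = c u} ≤ #{z | R z ∧ c z ≠ c u} := by
    refine card_le_card_of_injOn hM'.mate (fun z hz => ?_) hM'.mate_injective.injOn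
    simp only [coe_filter, mem_univ, true_and, Set.mem_ofPred_eq] at hz ⊢
    exact ⟨hstep hM' hz.1 (fun h => heM' (h ▸ hM'.edge_mem z)), hz.2 ▸ hc.mate_ne hM' z⟩
  have hB : #{z | R z ∧ c z ≠ c u} ≤ #(({z | R z ∧ c z = c u} : Finset G.V).erase u) := by
    refine card_le_card_of_injOn hM.mate (fun z hz => ?_) hM.mate_injective.injOn
    simp only [coe_filter, mem_univ, true_and, Set.mem_ofPred_eq, coe_erase, Set.mem_sdiff,
      Set.mem_singleton_iff] at hz ⊢
    have hze : hM.edge z ≠ e := by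
      intro h
      have := hM.mem_ends_edge z
      rw [h, he] at this
      rcases Sym2.mem_iff.1 this with rfl | rfl
      · exact hz.2 rfl
      · exact hv hz.1
    refine ⟨⟨hstep hM hz.1 hze, Bool.eq_of_ne_of_ne (hc.mate_ne hM z) hz.2⟩,
      fun hmu => hv ?_⟩
    have hzv : z = v := by rw [← hM.mate_mate z, hmu, hM.mate_eq heM he]
    exact hzv ▸ hz.1
  have hu : u ∈ ({z | R z ∧ c z = c u} : Finset G.V) :=
    mem_filter.2 ⟨mem_univ u, .refl, rfl⟩
  have := card_erase_add_one hu
  omega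

lemma Connected.deleteEdge (hG : G.Connected) {e : G.E} {u v : G.V} (he : G.ends e = s(u, v))
    (huv : Relation.ReflTransGen (G.deleteEdge e).Adj u v) : (G.deleteEdge e).Connected := by
  refine ⟨hG.1, fun p q => ?_⟩
  induction hG.2 p q with
  | refl => exact .refl
  | @tail a b _ hab ih =>
    obtain ⟨hne, g, hg⟩ := hab
    by_cases hge : g = e
    · rw [hge, he] at hg
      rcases Sym2.eq_iff.1 hg with ⟨rfl, rfl⟩ | ⟨rfl, rfl⟩
      · exact ih.trans huv
      · exact ih.trans (Relation.ReflTransGen.stdSymm.symm _ _ huv)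
    · exact ih.tail ⟨hne, ⟨g, hge⟩, hg⟩

end Multigraph

open Multigraph Finset in
/-- In a brace on six or more vertices, every edge is removable. -/
theorem brace_every_edge_removable
    (G : Multigraph) (hG : G.IsBrace) (h6 : 6 ≤ Nat.card G.V) (e : G.E) :
    G.Removable e := by
  rw [Nat.card_eq_fintype_card] at h6
  obtain ⟨c, hc⟩ : ∃ c, G.IsProperColoring c := hG.2.1
  obtain ⟨u, v, he⟩ := Sym2.exists_eq_mk (G.ends e)
  obtain ⟨M₀, hM₀, heM₀⟩ := hG.1.2.2 e
  obtain ⟨w, g, hg, hwv⟩ :=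
    hG.exists_ends_eq_notMem (by omega) u ((card_singleton v).trans_le one_le_two)
  have hge : g ≠ e := fun h =>
    hwv (mem_singleton.2 (Sym2.congr_right.1 (hg.symm.trans (h ▸ he))))
  obtain ⟨M, hM, -, heM⟩ := hG.exists_isPerfectMatching_mem_not_mem h6 hge
  refine ⟨hG.1.1, hG.1.2.1.deleteEdge he (hc.reflTransGen_deleteEdge he hM₀ heM₀ hM heM),
    fun f => ?_⟩
  obtain ⟨M', hM', hfM', heM'⟩ := hG.exists_isPerfectMatching_mem_not_mem h6 f.2
  exact ⟨_, hM'.deleteEdge heM', hfM'⟩
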